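/- Let x₁, x₂, x₃ ∈ ℝ³ (Euclidean space) be the vertices of a triangle T, let x(s,t) = (1−s−t)·x₁ + s·x₂ + t·x₃ be the affine parameterization over the reference triangle e₀ = {(s,t) ∈ ℝ² : 0 ≤ s, 0 ≤ t, s + t ≤ 1}, let x_c = (x₁ + x₂ + x₃)/3 be the centroid, and let |Δ| = ‖(x₂ − x₁) × (x₃ − x₁)‖ (twice the area of T). Let f : ℝ³ → ℝ be twice continuously differentiable on an open set containing T, let K ≥ 0 satisfy |f''(y)(v,v)| ≤ K‖v‖² for all y ∈ T and v ∈ ℝ³, and let h be the diameter of T (the maximum distance between two of its points). Then | |Δ|·∫_{e₀} f(x(s,t)) d(s,t) − (|Δ|/2)·f(x_c) | ≤ (|Δ|/4)·K·h². -/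

import Mathlib

open scoped RealInnerProductSpace

/-- The reference triangle `e₀ = {(s,t) : 0 ≤ s, 0 ≤ t, s + t ≤ 1}` in the plane. -/
def refTriangle : Set (ℝ × ℝ) := {p | 0 ≤ p.1 ∧ 0 ≤ p.2 ∧ p.1 + p.2 ≤ 1}

/-- Cross product of vectors in Euclidean three-space. -/
noncomputable def cross3 (a b : EuclideanSpace ℝ (Fin 3)) : EuclideanSpace ℝ (Fin 3) :=
  (EuclideanSpace.equiv (Fin 3) ℝ).symm
    (crossProduct ((EuclideanSpace.equiv (Fin 3) ℝ) a) ((EuclideanSpace.equiv (Fin 3) ℝ) b))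

/-!
Taylor-expand `f ∘ x` to second order around the centroid of the reference triangle. The linear
term integrates to zero over `e₀` because `(1/3, 1/3)` is the barycentre of `e₀`, and the
remainder is bounded pointwise by `K h² / 2` (every chord of `T` has length at most `h`), hence
its integral over `e₀`, which has area `1/2`, is at most `K h² / 4`.
-/

open Set MeasureTheory

theorem norm_image_sub_sub_deriv_le_segment {E : Type*} [NormedAddCommGroup E] [NormedSpace ℝ E]
    {φ φ' ψ : ℝ → E} {a b C : ℝ}
    (hφ : ∀ x ∈ Icc a b, HasDerivWithinAt φ (φ' x) (Icc a b) x)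
    (hφ' : ∀ x ∈ Icc a b, HasDerivWithinAt φ' (ψ x) (Icc a b) x)
    (hψ : ∀ x ∈ Ico a b, ‖ψ x‖ ≤ C) :
    ∀ x ∈ Icc a b, ‖φ x - φ a - (x - a) • φ' a‖ ≤ C * (x - a) ^ 2 / 2 := by
  have hslope : ∀ x ∈ Icc a b, ‖φ' x - φ' a‖ ≤ C * (x - a) :=
    norm_image_sub_le_of_norm_deriv_le_segment' hφ' hψ
  have hremainder (x : ℝ) (hx : x ∈ Icc a b) : HasDerivWithinAt
      (fun x => φ x - φ a - (x - a) • φ' a) (φ' x - φ' a) (Icc a b) x :=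
    ((hφ x hx).sub_const _).sub <| ((((hasDerivAt_id' x).sub_const a).smul_const (φ' a)).congr_deriv
      (one_smul _ _)).hasDerivWithinAt
  have hbound (x : ℝ) : HasDerivAt (fun x => C * (x - a) ^ 2 / 2) (C * (x - a)) x :=
    ((((hasDerivAt_id' x).sub_const a).fun_pow 2).const_mul C |>.div_const 2).congr_deriv (by ring)
  exact image_norm_le_of_norm_deriv_right_le_deriv_boundary
    (fun x hx => (hremainder x hx).continuousWithinAt)
    (fun x hx => (hremainder x (Ico_subset_Icc_self hx)).mono_of_mem_nhdsWithin
      (Icc_mem_nhdsGE_of_mem hx))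
    (by simp) hbound (fun x hx => hslope x (Ico_subset_Icc_self hx))

theorem norm_sub_sub_fderiv_le_of_iteratedFDeriv_two_le {E F : Type*} [NormedAddCommGroup E]
    [NormedSpace ℝ E] [NormedAddCommGroup F] [NormedSpace ℝ F] {f : E → F} {U : Set E}
    (hU : IsOpen U) (hf : ContDiffOn ℝ 2 f U) {a b : E} (hab : segment ℝ a b ⊆ U) {C : ℝ}
    (hC : ∀ y ∈ segment ℝ a b, ‖iteratedFDeriv ℝ 2 f y ![b - a, b - a]‖ ≤ C) :
    ‖f b - f a - fderiv ℝ f a (b - a)‖ ≤ C / 2 := by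
  set γ : ℝ → E := fun τ => a + τ • (b - a)
  have hγ_mem : ∀ τ ∈ Icc (0:ℝ) 1, γ τ ∈ segment ℝ a b := fun τ hτ => by
    rw [segment_eq_image']; exact mem_image_of_mem _ hτ
  have hγ (τ : ℝ) : HasDerivAt γ (b - a) τ :=
    ((hasDerivAt_id' τ).smul_const (b - a)).const_add a |>.congr_deriv (one_smul _ _)
  have hfγ (τ : ℝ) (hτ : τ ∈ Icc (0:ℝ) 1) : ContDiffAt ℝ 2 f (γ τ) :=
    hf.contDiffAt (hU.mem_nhds (hab (hγ_mem τ hτ)))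
  have hφ (τ : ℝ) (hτ : τ ∈ Icc (0:ℝ) 1) :
      HasDerivAt (fun τ => f (γ τ)) (fderiv ℝ f (γ τ) (b - a)) τ :=
    ((hfγ τ hτ).differentiableAt (by norm_num)).hasFDerivAt.comp_hasDerivAt τ (hγ τ)
  have hφ' (τ : ℝ) (hτ : τ ∈ Icc (0:ℝ) 1) : HasDerivAt (fun τ => fderiv ℝ f (γ τ) (b - a))
      (fderiv ℝ (fderiv ℝ f) (γ τ) (b - a) (b - a)) τ := by
    have hdf : DifferentiableAt ℝ (fderiv ℝ f) (γ τ) :=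
      ((hfγ τ hτ).fderiv_right (m := 1) (by norm_num)).differentiableAt (by norm_num)
    simpa using (hdf.hasFDerivAt.comp_hasDerivAt τ (hγ τ)).clm_apply (hasDerivAt_const τ (b - a))
  have hφ_taylor := norm_image_sub_sub_deriv_le_segment (C := C)
    (fun τ hτ => (hφ τ hτ).hasDerivWithinAt) (fun τ hτ => (hφ' τ hτ).hasDerivWithinAt)
    (fun τ hτ => ?_) 1 (right_mem_Icc.2 zero_le_one)
  · simpa [γ] using hφ_taylor
  · simpa [iteratedFDeriv_two_apply] using hC _ (hγ_mem τ (Ico_subset_Icc_self hτ))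

theorem Convex.norm_sub_sub_fderiv_le_diam_sq {E F : Type*} [NormedAddCommGroup E]
    [NormedSpace ℝ E] [NormedAddCommGroup F] [NormedSpace ℝ F] {f : E → F} {T U : Set E}
    (hT : Convex ℝ T) (hTb : Bornology.IsBounded T) (hU : IsOpen U) (hTU : T ⊆ U)
    (hf : ContDiffOn ℝ 2 f U) {K : ℝ} (hK : 0 ≤ K)
    (hK2 : ∀ y ∈ T, ∀ v, ‖iteratedFDeriv ℝ 2 f y ![v, v]‖ ≤ K * ‖v‖ ^ 2) {y z : E}
    (hy : y ∈ T) (hz : z ∈ T) :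
    ‖f z - f y - fderiv ℝ f y (z - y)‖ ≤ K * Metric.diam T ^ 2 / 2 := by
  refine norm_sub_sub_fderiv_le_of_iteratedFDeriv_two_le hU hf ((hT.segment_subset hy hz).trans hTU)
    fun w hw => (hK2 w (hT.segment_subset hy hz hw) _).trans ?_
  have hdist : ‖z - y‖ ≤ Metric.diam T :=
    dist_eq_norm z y ▸ Metric.dist_le_diam_of_mem hTb hz hy
  gcongr

theorem measurableSet_refTriangle : MeasurableSet refTriangle :=
  (measurableSet_le measurable_const measurable_fst).inter <|
    (measurableSet_le measurable_const measurable_snd).inter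
      (measurableSet_le (measurable_fst.add measurable_snd) measurable_const)

theorem isCompact_refTriangle : IsCompact refTriangle := by
  refine isCompact_Icc (a := (0, 0)) (b := (1, 1)) |>.of_isClosed_subset ?_ ?_
  · exact (isClosed_le continuous_const continuous_fst).inter <|
      (isClosed_le continuous_const continuous_snd).inter
        (isClosed_le (continuous_fst.add continuous_snd) continuous_const)
  · rintro p ⟨h₁, h₂, h₁₂⟩
    exact ⟨⟨h₁, h₂⟩, by linarith, by linarith⟩

theorem preimage_prodMk_refTriangle {s : ℝ} (hs : s ∈ Icc (0:ℝ) 1) :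
    Prod.mk s ⁻¹' refTriangle = Icc 0 (1 - s) := by
  ext t
  simp only [refTriangle, mem_preimage, mem_ofPred_eq, mem_Icc]
  constructor
  · rintro ⟨-, ht, hst⟩; exact ⟨ht, by linarith⟩
  · rintro ⟨ht, hst⟩; exact ⟨hs.1, ht, by linarith⟩

theorem preimage_prodMk_refTriangle_of_notMem {s : ℝ} (hs : s ∉ Icc (0:ℝ) 1) :
    Prod.mk s ⁻¹' refTriangle = ∅ :=
  eq_empty_of_forall_notMem fun _ ⟨h₁, _, h₁₂⟩ => hs ⟨h₁, by linarith⟩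

theorem integral_refTriangle {E : Type*} [NormedAddCommGroup E] [NormedSpace ℝ E]
    {F : ℝ × ℝ → E} (hF : IntegrableOn F refTriangle) :
    ∫ p in refTriangle, F p = ∫ s in (0:ℝ)..1, ∫ t in (0:ℝ)..(1 - s), F (s, t) := by
  have hslice (s : ℝ) : ∫ t, refTriangle.indicator F (s, t) =
      ∫ t in Prod.mk s ⁻¹' refTriangle, F (s, t) := by
    rw [← integral_indicator (measurable_prodMk_left measurableSet_refTriangle)]
    rfl
  rw [← integral_indicator measurableSet_refTriangle, Measure.volume_eq_prod,
    integral_prod _ ((integrable_indicator_iff measurableSet_refTriangle).2 hF),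
    intervalIntegral.integral_of_le zero_le_one, ← integral_Icc_eq_integral_Ioc,
    ← setIntegral_eq_integral_of_forall_compl_eq_zero (s := Icc 0 1) fun s hs => by
      rw [hslice, preimage_prodMk_refTriangle_of_notMem hs, Measure.restrict_empty,
        integral_zero_measure]]
  refine setIntegral_congr_fun measurableSet_Icc fun s hs => ?_
  rw [hslice, preimage_prodMk_refTriangle hs, intervalIntegral.integral_of_le (by linarith [hs.2]),
    integral_Icc_eq_integral_Ioc]

theorem integral_refTriangle_affine (a b c : ℝ) :
    ∫ p in refTriangle, (a + b * p.1 + c * p.2) = a / 2 + b / 6 + c / 6 := by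
  have hint {f : ℝ → ℝ} (hf : Continuous f) (u v : ℝ) : IntervalIntegrable f volume u v :=
    hf.intervalIntegrable u v
  have hinner (s : ℝ) : ∫ t in (0:ℝ)..(1 - s), (a + b * s + c * t) =
      (a + c / 2) + (b - a - c) * s + (c / 2 - b) * s ^ 2 := by
    rw [intervalIntegral.integral_add (hint continuous_const _ _) (hint (by fun_prop) _ _),
      intervalIntegral.integral_const_mul, integral_id]
    simp only [intervalIntegral.integral_const, smul_eq_mul]
    ring
  rw [integral_refTriangle ((by fun_prop : Continuous fun p : ℝ × ℝ => a + b * p.1 + c * p.2)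
    |>.continuousOn.integrableOn_compact isCompact_refTriangle)]
  simp only [hinner]
  rw [intervalIntegral.integral_add (hint (by fun_prop) _ _) (hint (by fun_prop) _ _),
    intervalIntegral.integral_add (hint (by fun_prop) _ _) (hint (by fun_prop) _ _),
    intervalIntegral.integral_const_mul, intervalIntegral.integral_const_mul, integral_id,
    integral_pow]
  simp only [intervalIntegral.integral_const, smul_eq_mul]
  ring

theorem measureReal_refTriangle : volume.real refTriangle = 1 / 2 := by
  simpa using integral_refTriangle_affine 1 0 0

noncomputable def refCentroid : ℝ × ℝ := (1 / 3, 1 / 3)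

theorem integral_refTriangle_sub_refCentroid (ℓ : ℝ × ℝ →L[ℝ] ℝ) :
    ∫ p in refTriangle, ℓ (p - refCentroid) = 0 := by
  have hℓ (p : ℝ × ℝ) : ℓ (p - refCentroid) =
      -(ℓ (1, 0) + ℓ (0, 1)) / 3 + ℓ (1, 0) * p.1 + ℓ (0, 1) * p.2 := by
    have hp : p - refCentroid = (p.1 - 1 / 3) • ((1, 0) : ℝ × ℝ) + (p.2 - 1 / 3) • (0, 1) := by
      ext <;> simp [refCentroid]
    rw [hp, map_add, map_smul, map_smul, smul_eq_mul, smul_eq_mul]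
    ring
  simp only [hℓ, integral_refTriangle_affine]
  ring

theorem refCentroid_mem_refTriangle : refCentroid ∈ refTriangle := by
  norm_num [refCentroid, refTriangle]

theorem barycentric_mem_convexHull {E : Type*} [AddCommGroup E] [Module ℝ E] {x₁ x₂ x₃ : E}
    {p : ℝ × ℝ} (hp : p ∈ refTriangle) :
    (1 - p.1 - p.2) • x₁ + p.1 • x₂ + p.2 • x₃ ∈ convexHull ℝ {x₁, x₂, x₃} := by
  obtain ⟨h₁, h₂, h₁₂⟩ := hp
  simpa [Fin.sum_univ_three] using (convex_convexHull ℝ {x₁, x₂, x₃}).sum_mem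
    (t := Finset.univ) (w := ![1 - p.1 - p.2, p.1, p.2]) (z := ![x₁, x₂, x₃])
    (fun i _ => by fin_cases i <;> simp <;> linarith)
    (by simp [Fin.sum_univ_three]; ring)
    (fun i _ => subset_convexHull ℝ _ (by fin_cases i <;> simp))

theorem abs_integral_refTriangle_sub_half_le {g : ℝ × ℝ → ℝ} (hg : IntegrableOn g refTriangle)
    (ℓ : ℝ × ℝ →L[ℝ] ℝ) {M : ℝ}
    (hM : ∀ p ∈ refTriangle, |g p - g refCentroid - ℓ (p - refCentroid)| ≤ M) :
    |(∫ p in refTriangle, g p) - g refCentroid / 2| ≤ M / 2 := by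
  have hfin : volume refTriangle < ⊤ := isCompact_refTriangle.measure_lt_top
  have hconst : IntegrableOn (fun _ => g refCentroid) refTriangle := integrableOn_const hfin.ne
  have hlin : IntegrableOn (fun p => ℓ (p - refCentroid)) refTriangle :=
    (ℓ.continuous.comp (continuous_sub_right _)).continuousOn.integrableOn_compact
      isCompact_refTriangle
  have hsplit : ∫ p in refTriangle, (g p - g refCentroid - ℓ (p - refCentroid)) =
      (∫ p in refTriangle, g p) - g refCentroid / 2 := by
    rw [integral_sub (f := fun p => g p - g refCentroid) (hg.sub hconst) hlin,
      integral_sub hg hconst, setIntegral_const, measureReal_refTriangle,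
      integral_refTriangle_sub_refCentroid, smul_eq_mul]
    ring
  calc |(∫ p in refTriangle, g p) - g refCentroid / 2|
      ≤ M * volume.real refTriangle := by
        rw [← hsplit, ← Real.norm_eq_abs]
        exact norm_setIntegral_le_of_norm_le_const hfin
          fun p hp => (hM p hp).trans_eq' (Real.norm_eq_abs _)
    _ = M / 2 := by rw [measureReal_refTriangle]; ring

/-- Single-triangle centroid quadrature estimate (Lemma 6, 3D case, single element):
for `f` twice continuously differentiable on an open set containing the triangle `T` with
vertices `x₁, x₂, x₃`, with second derivative bounded as a quadratic form by `K`, the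
centroid rule has error at most `(|Δ|/4) K h²`, where `|Δ| = ‖(x₂−x₁) × (x₃−x₁)‖` and
`h = diam T`. -/
theorem centroid_rule_triangle_estimate
    (x₁ x₂ x₃ : EuclideanSpace ℝ (Fin 3))
    (T : Set (EuclideanSpace ℝ (Fin 3))) (hT : T = convexHull ℝ {x₁, x₂, x₃})
    (f : EuclideanSpace ℝ (Fin 3) → ℝ)
    (U : Set (EuclideanSpace ℝ (Fin 3))) (hU : IsOpen U) (hTU : T ⊆ U)
    (hf : ContDiffOn ℝ 2 f U)
    (K : ℝ) (hK : 0 ≤ K)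
    (hK2 : ∀ y ∈ T, ∀ v : EuclideanSpace ℝ (Fin 3),
      |iteratedFDeriv ℝ 2 f y ![v, v]| ≤ K * ‖v‖ ^ 2) :
    |‖cross3 (x₂ - x₁) (x₃ - x₁)‖ *
        (∫ p in refTriangle, f ((1 - p.1 - p.2) • x₁ + p.1 • x₂ + p.2 • x₃)) -
      (‖cross3 (x₂ - x₁) (x₃ - x₁)‖ / 2) * f (((1:ℝ)/3) • (x₁ + x₂ + x₃))|
      ≤ (‖cross3 (x₂ - x₁) (x₃ - x₁)‖ / 4) * K * (Metric.diam T) ^ 2 := by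
  set X : ℝ × ℝ → EuclideanSpace ℝ (Fin 3) :=
    fun p => (1 - p.1 - p.2) • x₁ + p.1 • x₂ + p.2 • x₃
  set L : ℝ × ℝ →L[ℝ] EuclideanSpace ℝ (Fin 3) :=
    (ContinuousLinearMap.fst ℝ ℝ ℝ).smulRight (x₂ - x₁) +
      (ContinuousLinearMap.snd ℝ ℝ ℝ).smulRight (x₃ - x₁)
  have hXL (p q : ℝ × ℝ) : X p - X q = L (p - q) := by
    simp only [add_apply, ContinuousLinearMap.smulRight_apply, ContinuousLinearMap.coe_fst',
      ContinuousLinearMap.coe_snd', Prod.fst_sub, Prod.snd_sub, X, L]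
    module
  have hcentroid : ((1:ℝ) / 3) • (x₁ + x₂ + x₃) = X refCentroid := by
    simp only [X, refCentroid]
    module
  have hXT (p : ℝ × ℝ) (hp : p ∈ refTriangle) : X p ∈ T := hT ▸ barycentric_mem_convexHull hp
  have hTaylor (p : ℝ × ℝ) (hp : p ∈ refTriangle) :
      |f (X p) - f (X refCentroid) - (fderiv ℝ f (X refCentroid)).comp L (p - refCentroid)|
        ≤ K * Metric.diam T ^ 2 / 2 := by
    rw [ContinuousLinearMap.comp_apply, ← hXL, ← Real.norm_eq_abs]
    exact (hT ▸ convex_convexHull ℝ _).norm_sub_sub_fderiv_le_diam_sq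
      (hT ▸ (Set.toFinite _).isCompact_convexHull (𝕜 := ℝ).isBounded) hU hTU hf hK
      (fun y hy v => (hK2 y hy v).trans_eq' (Real.norm_eq_abs _))
      (hXT _ refCentroid_mem_refTriangle) (hXT p hp)
  have hint : IntegrableOn (fun p => f (X p)) refTriangle :=
    (hf.continuousOn.comp (by fun_prop) fun p hp => hTU (hXT p hp)).integrableOn_compact
      isCompact_refTriangle
  set D := ‖cross3 (x₂ - x₁) (x₃ - x₁)‖
  rw [hcentroid]
  calc |D * (∫ p in refTriangle, f (X p)) - D / 2 * f (X refCentroid)|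
      = |D * ((∫ p in refTriangle, f (X p)) - f (X refCentroid) / 2)| := by ring_nf
    _ = D * |(∫ p in refTriangle, f (X p)) - f (X refCentroid) / 2| := by
        rw [abs_mul, abs_of_nonneg (norm_nonneg _)]
    _ ≤ D * (K * Metric.diam T ^ 2 / 2 / 2) :=
        mul_le_mul_of_nonneg_left (abs_integral_refTriangle_sub_half_le hint _ hTaylor)
          (norm_nonneg _)
    _ = D / 4 * K * Metric.diam T ^ 2 := by ring
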